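/- arXiv:1103.3224 — 2 statements merged into one kernel-verified Lean document; each statement's English description precedes it below -/
import Mathlib

section
/- Let m ≥ 2 and K be positive integers and N = 2mK+1. If p_1,...,p_m are nonnegative integers and q_1,...,q_m are positive integers with p_1+⋯+p_m = mK, q_1+⋯+q_m = mN, and p_j/q_j ≥ K/N for every j = 1,...,m, then p_j = K and q_j = N for every j = 1,...,m. -/
/-!
Clearing denominators, `p_j / q_j ≥ K / N` reads `K q_j ≤ N p_j`; summing over `j` both sides
equal `m K N`, so each inequality is an equality `K q_j = N p_j`. As `N = 2mK + 1` is coprime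
to `K`, every `q_j` is a positive multiple of `N`, and `∑ q_j = mN` forces `q_j = N`, hence
`p_j = K`.
-/

open Finset

lemma Finset.eq_of_dvd_of_sum_eq_card_mul {ι : Type*} (s : Finset ι) {q : ι → ℕ} {N : ℕ}
    (hq : ∀ i ∈ s, 0 < q i) (hdvd : ∀ i ∈ s, N ∣ q i) (hsum : ∑ i ∈ s, q i = #s * N) :
    ∀ i ∈ s, q i = N := by
  have hle : ∀ i ∈ s, N ≤ q i := fun i hi => Nat.le_of_dvd (hq i hi) (hdvd i hi)
  have hsum' : ∑ _i ∈ s, N = ∑ i ∈ s, q i := by rw [sum_const, smul_eq_mul, hsum]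
  exact fun i hi => ((sum_eq_sum_iff_of_le hle).mp hsum' i hi).symm

lemma Finset.mul_eq_mul_of_le_of_sum_eq {ι : Type*} (s : Finset ι) {p q : ι → ℕ} {a b : ℕ}
    (hle : ∀ i ∈ s, a * q i ≤ b * p i) (hsum : a * ∑ i ∈ s, q i = b * ∑ i ∈ s, p i) :
    ∀ i ∈ s, a * q i = b * p i := by
  rw [mul_sum, mul_sum] at hsum
  exact (sum_eq_sum_iff_of_le hle).mp hsum

lemma Nat.mul_le_mul_of_cast_div_le_div {a b c d : ℕ} (hb : 0 < b) (hd : 0 < d)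
    (h : (a : ℝ) / b ≤ c / d) : a * d ≤ c * b := by
  have h' := (div_le_div_iff₀ (Nat.cast_pos.mpr hb) (Nat.cast_pos.mpr hd)).mp h
  exact_mod_cast h'

theorem integrality_general_general (m K N : ℕ)
    (hN : N = 2 * m * K + 1)
    (p q : Fin m → ℕ) (hq : ∀ j, 0 < q j)
    (hp : ∑ j, p j = m * K) (hqsum : ∑ j, q j = m * N)
    (hge : ∀ j, (p j : ℝ) / q j ≥ (K : ℝ) / N) :
    ∀ j, p j = K ∧ q j = N := by
  have hN0 : 0 < N := by omega
  have hcross : ∀ j ∈ univ, K * q j ≤ N * p j := fun j _ => by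
    simpa only [mul_comm N] using Nat.mul_le_mul_of_cast_div_le_div hN0 (hq j) (hge j)
  have hmul : ∀ j ∈ univ, K * q j = N * p j :=
    univ.mul_eq_mul_of_le_of_sum_eq hcross (by rw [hp, hqsum]; ring)
  have hcop : N.Coprime K := by
    rw [hN, Nat.coprime_mul_right_add_left]
    exact Nat.coprime_one_left K
  have hqN : ∀ j ∈ univ, q j = N :=
    univ.eq_of_dvd_of_sum_eq_card_mul (fun j _ => hq j)
      (fun j hj => hcop.dvd_of_dvd_mul_left ⟨p j, hmul j hj⟩) (by simpa using hqsum)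
  intro j
  have hpj : N * p j = N * K := by rw [← hmul j (mem_univ j), hqN j (mem_univ j), mul_comm]
  exact ⟨Nat.eq_of_mul_eq_mul_left hN0 hpj, hqN j (mem_univ j)⟩

/-- Integrality step in the reduction of 3-partition to fractional partition:
with `N = 2mK+1`, if nonnegative integers `p_j` and positive integers `q_j` satisfy
`∑ p_j = mK`, `∑ q_j = mN`, and `p_j/q_j ≥ K/N` for every `j`, then `p_j = K` and
`q_j = N` for every `j`. -/
theorem integrality_general (m K N : ℕ) (hm : 2 ≤ m) (hK : 0 < K)
    (hN : N = 2 * m * K + 1)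
    (p q : Fin m → ℕ) (hq : ∀ j, 0 < q j)
    (hp : ∑ j, p j = m * K) (hqsum : ∑ j, q j = m * N)
    (hge : ∀ j, (p j : ℝ) / q j ≥ (K : ℝ) / N) :
    ∀ j, p j = K ∧ q j = N :=
  integrality_general_general m K N hN p q hq hp hqsum hge
end

section
/- Let c_1,...,c_n be positive integers with c_1+⋯+c_n = 2K for a positive integer K. Let N = 4K+1, ε' = (−(4N³+2KN−N²−1) + √((4N³+2KN−N²−1)² + 16N³))/(8N²), ε = 1/⌈1/ε'⌉, and δ = 2ε/(5N−4n+1). Define rational families A, B indexed by {1,...,2N+2}: A consists of c_1,...,c_n, then δ repeated N+n−1 times, then 3δ/2 repeated N−2n+1 times, then K, K; B consists of 1 repeated 2N times, then N+ε, N+ε. Then there exists a subset J ⊆ {1,...,n} with Σ_{i∈J} c_i = K if and only if there exists a partition of {1,...,2N+2} into two disjoint nonempty subsets I_1, I_2 with union {1,...,2N+2} such that (Σ_{i∈I_j} A_i)/(Σ_{i∈I_j} B_i) = (2K+ε/2)/(2N+ε) for j = 1,2. -/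
/-!
Describe a part `X` by four natural numbers: `C`, the sum of the `c_i` in `X`; `s`, the number of
indices with `B = 1`; `u`, the `δ`- and `3δ/2`-items measured in units of `δ/2`; and `t`, the
number of the two big items. With `L = 5N - 4n + 1` and `δ = 2ε/L`, multiplying out the ratio
condition turns it into `4L(NC - Ks) + pε + qε² = 0` with integers `p, q` of size `O(NL)`, and
`ε ≤ 1/(3N²)` forces all three coefficients to vanish. This yields `C = Kt` and `s = Nt`; both
parts are nonempty, so each contains a big item, `t = 1`, and the `c_i` in the first part sum to
`K`. Conversely, the indices of `J`, enough `δ`- and `3δ/2`-items and one big item form a part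
with `C = K`, `s = N`, `2u = L`, `t = 1`, and so does its complement.
-/

open Finset

section Blocks

variable {β : Type*} [AddCommMonoid β]

def blockFun (p q r : ℕ) (f : ℕ → β) (v₂ v₃ v₄ : β) (k : ℕ) : β :=
  if k < p then f k else if k < q then v₂ else if k < r then v₃ else v₄

theorem sum_Ico_add_eq_nsmul {g : ℕ → β} {p a : ℕ} {v : β}
    (h : ∀ k, p ≤ k → k < p + a → g k = v) : ∑ k ∈ Ico p (p + a), g k = a • v := by
  rw [sum_congr rfl fun k hk => h k (mem_Ico.1 hk).1 (mem_Ico.1 hk).2, sum_const,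
    Nat.card_Ico, add_tsub_cancel_left]

theorem sum_blockFun_union {p q r a b d : ℕ} {S : Finset ℕ} (hS : S ⊆ range p)
    (ha : p + a ≤ q) (hb : q + b ≤ r) (f : ℕ → β) (v₂ v₃ v₄ : β) :
    ∑ k ∈ S ∪ Ico p (p + a) ∪ Ico q (q + b) ∪ Ico r (r + d), blockFun p q r f v₂ v₃ v₄ k
      = ∑ k ∈ S, f k + a • v₂ + b • v₃ + d • v₄ := by
  have hS' : ∀ k ∈ S, k < p := fun k hk => mem_range.1 (hS hk)
  have h₁ : ∑ k ∈ S, blockFun p q r f v₂ v₃ v₄ k = ∑ k ∈ S, f k :=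
    sum_congr rfl fun k hk => if_pos (hS' k hk)
  have h₂ : ∑ k ∈ Ico p (p + a), blockFun p q r f v₂ v₃ v₄ k = a • v₂ :=
    sum_Ico_add_eq_nsmul fun k _ _ => by rw [blockFun, if_neg (by omega), if_pos (by omega)]
  have h₃ : ∑ k ∈ Ico q (q + b), blockFun p q r f v₂ v₃ v₄ k = b • v₃ :=
    sum_Ico_add_eq_nsmul fun k _ _ => by
      rw [blockFun, if_neg (by omega), if_neg (by omega), if_pos (by omega)]
  have h₄ : ∑ k ∈ Ico r (r + d), blockFun p q r f v₂ v₃ v₄ k = d • v₄ :=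
    sum_Ico_add_eq_nsmul fun k _ _ => by
      rw [blockFun, if_neg (by omega), if_neg (by omega), if_neg (by omega)]
  rw [sum_union, sum_union, sum_union, h₁, h₂, h₃, h₄]
  all_goals
    rw [disjoint_left]
    intro k hk
    simp only [mem_union, mem_Ico] at hk ⊢
    by_cases hkS : k ∈ S
    · have := hS' k hkS
      omega
    · simp only [hkS, false_or] at hk <;> omega

theorem sum_range_blockFun {p q r : ℕ} (d : ℕ) (hpq : p ≤ q) (hqr : q ≤ r) (f : ℕ → β)
    (v₂ v₃ v₄ : β) :
    ∑ k ∈ range (r + d), blockFun p q r f v₂ v₃ v₄ k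
      = ∑ k ∈ range p, f k + (q - p) • v₂ + (r - q) • v₃ + d • v₄ := by
  have hsplit : range (r + d)
      = range p ∪ Ico p (p + (q - p)) ∪ Ico q (q + (r - q)) ∪ Ico r (r + d) := by
    ext k; simp only [mem_union, mem_range, mem_Ico]; omega
  rw [hsplit, sum_blockFun_union subset_rfl (by omega) (by omega)]

end Blocks

theorem card_le_sum_of_pos {ι : Type*} {f : ι → ℕ} (hf : ∀ i, 0 < f i) (s : Finset ι) :
    s.card ≤ ∑ i ∈ s, f i := by
  simpa using card_nsmul_le_sum s f 1 fun i _ => hf i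

theorem sum_filter_coe_mem {β : Type*} [AddCommMonoid β] {M : ℕ} {Y : Finset ℕ}
    (hY : Y ⊆ range M) (f : ℕ → β) :
    ∑ i ∈ univ.filter (fun i : Fin M => (i : ℕ) ∈ Y), f i = ∑ k ∈ Y, f k := by
  rw [sum_filter, Fin.sum_univ_eq_sum_range (fun k => if k ∈ Y then f k else 0), sum_ite_mem,
    inter_eq_right.2 hY]

theorem int_coeffs_eq_zero_of_small {d : ℕ} {z p q : ℤ} {ε : ℚ} (hε : 0 < ε)
    (h : d * z + p * ε + q * ε ^ 2 = 0) (hsmall : |(p : ℚ)| * ε + |(q : ℚ)| * ε ^ 2 < d)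
    (hq : |(q : ℚ)| * ε < 1) : z = 0 ∧ p = 0 ∧ q = 0 := by
  have hz : z = 0 := by
    have hd : (0 : ℚ) < d := lt_of_le_of_lt (by positivity) hsmall
    have hdz : d * |(z : ℚ)| < d := by
      calc d * |(z : ℚ)| = |(d : ℚ) * z| := by rw [abs_mul, abs_of_pos hd]
        _ = |p * ε + q * ε ^ 2| := by
            rw [← abs_neg]
            congr 1
            linarith
        _ ≤ |(p : ℚ)| * ε + |(q : ℚ)| * ε ^ 2 := by
            refine (abs_add_le _ _).trans_eq ?_
            rw [abs_mul, abs_mul, abs_of_pos hε, abs_of_pos (by positivity : (0 : ℚ) < ε ^ 2)]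
        _ < d := hsmall
    have : |(z : ℚ)| < 1 := by nlinarith
    exact Int.abs_lt_one_iff.1 (by exact_mod_cast this)
  subst hz
  have hp : (p : ℚ) = -(q * ε) := by
    have : ε * (p + q * ε) = 0 := by linear_combination h
    linear_combination (mul_eq_zero.1 this).resolve_left hε.ne'
  have hp0 : p = 0 := by
    have : |(p : ℚ)| < 1 := by rwa [hp, abs_neg, abs_mul, abs_of_pos hε]
    exact Int.abs_lt_one_iff.1 (by exact_mod_cast this)
  subst hp0
  refine ⟨rfl, rfl, ?_⟩
  have : (q : ℚ) * ε = 0 := by simpa using hp.symm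
  exact_mod_cast (mul_eq_zero.1 this).resolve_right hε.ne'

theorem pos_root_pos_and_mul_le {N β x : ℝ} (hN : 0 < N) (hβ : 0 < β)
    (hx : x = (-β + √(β ^ 2 + 16 * N ^ 3)) / (8 * N ^ 2)) : 0 < x ∧ β * x ≤ N := by
  have hS : β < √(β ^ 2 + 16 * N ^ 3) :=
    (Real.lt_sqrt hβ.le).2 (lt_add_of_pos_right _ (by positivity))
  have hS2 := Real.sq_sqrt (by positivity : 0 ≤ β ^ 2 + 16 * N ^ 3)
  set S := √(β ^ 2 + 16 * N ^ 3)
  have hxpos : 0 < x := by rw [hx]; exact div_pos (by linarith) (by positivity)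
  -- `x` is the positive root of `4 N² x² + β x - N`
  have hroot : 4 * N ^ 2 * x ^ 2 + β * x = N := by
    rw [hx]
    field_simp
    linear_combination 4 * hS2
  exact ⟨hxpos, by nlinarith [sq_nonneg x]⟩

theorem one_div_ceil_one_div_le {x : ℝ} (hx : 0 < x) : 0 < ⌈1 / x⌉ ∧ 1 / (⌈1 / x⌉ : ℝ) ≤ x := by
  have hceil : 0 < ⌈1 / x⌉ := Int.ceil_pos.2 (by positivity)
  refine ⟨hceil, ?_⟩
  rw [div_le_iff₀ (by exact_mod_cast hceil), ← div_le_iff₀' hx]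
  exact Int.le_ceil _

theorem eps_pos_and_le {K N : ℕ} (hK : 0 < K) (hN : N = 4 * K + 1) {ε' : ℝ}
    (hε' : ε' = (-(4 * (N : ℝ) ^ 3 + 2 * (K : ℝ) * (N : ℝ) - (N : ℝ) ^ 2 - 1)
        + Real.sqrt ((4 * (N : ℝ) ^ 3 + 2 * (K : ℝ) * (N : ℝ) - (N : ℝ) ^ 2 - 1) ^ 2
            + 16 * (N : ℝ) ^ 3)) / (8 * (N : ℝ) ^ 2))
    {ε : ℚ} (hε : ε = 1 / ((⌈1 / ε'⌉ : ℤ) : ℚ)) : 0 < ε ∧ 3 * (N : ℚ) ^ 2 * ε ≤ 1 := by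
  have hN5 : (5 : ℝ) ≤ N := by exact_mod_cast (show 5 ≤ N by omega)
  have hβ : 3 * (N : ℝ) ^ 3 ≤ 4 * (N : ℝ) ^ 3 + 2 * (K : ℝ) * (N : ℝ) - (N : ℝ) ^ 2 - 1 := by
    nlinarith [sq_nonneg (N : ℝ), (Nat.cast_nonneg K : (0 : ℝ) ≤ K)]
  obtain ⟨hε'pos, hβε'⟩ := pos_root_pos_and_mul_le (by positivity)
    (lt_of_lt_of_le (by positivity) hβ) hε'
  obtain ⟨hceil, hεε'⟩ := one_div_ceil_one_div_le hε'pos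
  have hεR : ((ε : ℚ) : ℝ) = 1 / (⌈1 / ε'⌉ : ℝ) := by rw [hε]; push_cast; rfl
  refine ⟨by rw [hε]; exact one_div_pos.2 (by exact_mod_cast hceil), ?_⟩
  have hε'N : 3 * (N : ℝ) ^ 2 * ε' ≤ 1 := by
    have h₁ : (N : ℝ) * (3 * N ^ 2 * ε') ≤ N * 1 := by
      nlinarith [mul_le_mul_of_nonneg_right hβ hε'pos.le]
    exact le_of_mul_le_mul_left h₁ (by positivity)
  have : 3 * (N : ℝ) ^ 2 * ε ≤ 1 := by
    rw [hεR]
    nlinarith [mul_le_mul_of_nonneg_left hεε' (by positivity : (0 : ℝ) ≤ 3 * N ^ 2)]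
  exact_mod_cast this

theorem profile_eq_of_int_coeffs_eq_zero {K N L C s u t : ℤ} (hN : N = 4 * K + 1) (hL : L ≠ 0)
    (hz : N * C - K * s = 0) (hp : 4 * N * u + L * (2 * C - 2 * K * t - s - N * t) = 0)
    (hq : 2 * u - L * t = 0) : C = K * t ∧ s = N * t := by
  have hs : s = 2 * C + (2 * K + 1) * t := by
    have : L * (2 * C + (2 * K + 1) * t - s) = 0 := by
      linear_combination hp - 2 * N * hq - L * t * hN
    linarith [(mul_eq_zero.1 this).resolve_left hL]
  have hC : (2 * K + 1) * (C - K * t) = 0 := by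
    linear_combination hz + K * hs - C * hN
  have hC' : C = K * t := by linarith [(mul_eq_zero.1 hC).resolve_left (by omega)]
  exact ⟨hC', by rw [hs, hC', hN]; ring⟩

theorem abs_linear_coeff_le {K N L C s u t : ℕ} (hN : N = 4 * K + 1) (hC : C ≤ 2 * K)
    (hs : s ≤ 2 * N) (hu : u ≤ L) (ht : t ≤ 2) :
    |(4 * N * u + L * (2 * C - 2 * K * t - s - N * t) : ℚ)| ≤ 5 * N * L := by
  have hKq : (N : ℚ) = 4 * K + 1 := by exact_mod_cast hN
  have h₁ : (N : ℚ) * u ≤ N * L := by gcongr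
  have h₂ : (L : ℚ) * C ≤ L * (2 * K) := by gcongr; exact_mod_cast hC
  have h₃ : (L : ℚ) * (K * t) ≤ L * (K * 2) := by gcongr; exact_mod_cast ht
  have h₄ : (L : ℚ) * s ≤ L * (2 * N) := by gcongr; exact_mod_cast hs
  have h₅ : (L : ℚ) * (N * t) ≤ L * (N * 2) := by gcongr; exact_mod_cast ht
  have h₆ : (0 : ℚ) ≤ L * C := by positivity
  have h₇ : (0 : ℚ) ≤ L * (K * t) := by positivity
  have h₈ : (0 : ℚ) ≤ L * s := by positivity
  have h₉ : (0 : ℚ) ≤ L * (N * t) := by positivity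
  have h₁₀ : (0 : ℚ) ≤ N * u := by positivity
  have h₁₁ : (L : ℚ) * N = L * (4 * K + 1) := by rw [hKq]
  rw [abs_le]
  constructor <;> linarith

theorem abs_quadratic_coeff_le {L u t : ℕ} (hu : u ≤ L) (ht : t ≤ 2) :
    |(2 * u - L * t : ℚ)| ≤ 2 * L := by
  have h₁ : (L : ℚ) * t ≤ L * 2 := by gcongr; exact_mod_cast ht
  have h₂ : (0 : ℚ) ≤ L * t := by positivity
  have h₃ : (u : ℚ) ≤ L := by exact_mod_cast hu
  rw [abs_le]
  constructor <;> linarith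

theorem small_of_coeff_bounds {N L : ℕ} {P Q ε : ℚ} (hN : 5 ≤ N) (hL : L ≤ 5 * N + 1)
    (hL0 : 0 < L) (hε : 0 < ε) (hεN : 3 * (N : ℚ) ^ 2 * ε ≤ 1) (hP : |P| ≤ 5 * N * L)
    (hQ : |Q| ≤ 2 * L) :
    |P| * ε + |Q| * ε ^ 2 < 4 * L ∧ |Q| * ε < 1 := by
  have hN5 : (5 : ℚ) ≤ N := by exact_mod_cast hN
  have hNε : 15 * (N * ε) ≤ 1 := by
    have : 5 * (N * ε) ≤ N * (N * ε) := mul_le_mul_of_nonneg_right hN5 (by positivity)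
    linarith
  have hε75 : 75 * ε ≤ 1 := by
    have : 5 * ε ≤ N * ε := mul_le_mul_of_nonneg_right hN5 hε.le
    linarith
  have hQε := mul_le_mul_of_nonneg_right hQ hε.le
  have hLε : (L : ℚ) * ε ≤ (5 * N + 1) * ε :=
    mul_le_mul_of_nonneg_right (by exact_mod_cast hL) hε.le
  refine ⟨?_, by linarith⟩
  have h₁ := mul_le_mul_of_nonneg_right hP hε.le
  have h₂ := mul_le_mul_of_nonneg_right hQ (sq_nonneg ε)
  have h₃ : (L : ℚ) * (15 * (N * ε)) ≤ L * 1 := by gcongr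
  have h₄ : (L : ℚ) * ε ^ 2 ≤ L * 1 := by gcongr; nlinarith
  have h₅ : (0 : ℚ) < L := by exact_mod_cast hL0
  linarith

theorem profile_eq_of_ratio_eq {K N L C s u t : ℕ} {ε δ : ℚ} (hK : 0 < K)
    (hN : N = 4 * K + 1) (hL : L ≤ 5 * N + 1) (hε : 0 < ε) (hεN : 3 * (N : ℚ) ^ 2 * ε ≤ 1)
    (hδ : δ * L = 2 * ε) (hC : C ≤ 2 * K) (hs : s ≤ 2 * N) (hu : u ≤ L) (ht : t ≤ 2)
    (hst : 0 < s + t)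
    (h : (C + δ / 2 * u + K * t) / (s + (N + ε) * t) = (2 * (K : ℚ) + ε / 2) / (2 * N + ε)) :
    C = K * t ∧ s = N * t := by
  have hL0 : L ≠ 0 := by rintro rfl; rw [Nat.cast_zero, mul_zero] at hδ; linarith
  have hden : (0 : ℚ) < s + (N + ε) * t := by
    rcases Nat.eq_zero_or_pos t with rfl | ht0
    · simp only [CharP.cast_eq_zero, mul_zero, add_zero, Nat.cast_pos]; omega
    · positivity
  have hcross := (div_eq_div_iff hden.ne' (by positivity)).1 h
  -- `2L` times the cross-multiplied equation is a quadratic in `ε` with integer coefficients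
  have key : ((4 * L : ℕ) : ℚ) * ((N * C - K * s : ℤ) : ℚ)
      + ((4 * N * u + L * (2 * C - 2 * K * t - s - N * t) : ℤ) : ℚ) * ε
      + ((2 * u - L * t : ℤ) : ℚ) * ε ^ 2 = 0 := by
    push_cast
    linear_combination 2 * (L : ℚ) * hcross - u * (2 * N + ε) * hδ
  obtain ⟨hsmall, hεq⟩ := small_of_coeff_bounds (by omega) hL (Nat.pos_of_ne_zero hL0) hε hεN
    (abs_linear_coeff_le hN hC hs hu ht) (abs_quadratic_coeff_le hu ht)
  obtain ⟨hz, hp, hq⟩ := int_coeffs_eq_zero_of_small hε key (by push_cast; linarith)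
    (by push_cast; linarith)
  exact_mod_cast profile_eq_of_int_coeffs_eq_zero (by exact_mod_cast hN) (by exact_mod_cast hL0)
    hz hp hq

theorem ratio_eq_of_profile {K N L C s u t : ℕ} {ε δ : ℚ} (hε : 0 < ε) (hδ : δ * L = 2 * ε)
    (hC : C = K * t) (hs : s = N * t) (hu : 2 * u = L * t) (ht : t ≠ 0) :
    (C + δ / 2 * u + K * t) / (s + (N + ε) * t) = (2 * (K : ℚ) + ε / 2) / (2 * N + ε) := by
  have hu' : δ * u = ε * t := by
    have : (2 * u : ℚ) = L * t := by exact_mod_cast hu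
    linear_combination (δ / 2) * this + t / 2 * hδ
  have ht' : (t : ℚ) ≠ 0 := by exact_mod_cast ht
  rw [div_eq_div_iff (by subst hs; positivity) (by positivity), hC, hs]
  push_cast
  linear_combination (2 * N + ε) / 2 * hu'

namespace PartitionReduction

variable (n N : ℕ)

-- Summed over a part, `cWeight`, `unitCount`, `fillWeight`, `bigCount` are `C`, `s`, `u`, `t`.

def cItem (c : Fin n → ℕ) (k : ℕ) : ℕ := if h : k < n then c ⟨k, h⟩ else 0

def cWeight (c : Fin n → ℕ) : ℕ → ℕ := blockFun n (n + (N + n - 1)) (2 * N) (cItem n c) 0 0 0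

def unitCount : ℕ → ℕ := blockFun n (n + (N + n - 1)) (2 * N) (fun _ => 1) 1 1 0

def fillWeight : ℕ → ℕ := blockFun n (n + (N + n - 1)) (2 * N) (fun _ => 0) 2 3 0

def bigCount : ℕ → ℕ := blockFun n (n + (N + n - 1)) (2 * N) (fun _ => 0) 0 0 1

def familyA (K : ℕ) (c : Fin n → ℕ) (δ : ℚ) (i : Fin (2 * N + 2)) : ℚ :=
  if h : (i : ℕ) < n then (c ⟨(i : ℕ), h⟩ : ℚ)
  else if (i : ℕ) < n + (N + n - 1) then δ
  else if (i : ℕ) < 2 * N then 3 * δ / 2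
  else (K : ℚ)

def familyB (ε : ℚ) (i : Fin (2 * N + 2)) : ℚ := if (i : ℕ) < 2 * N then 1 else (N : ℚ) + ε

variable {n N}

theorem sum_familyA (K : ℕ) (c : Fin n → ℕ) (δ : ℚ) (X : Finset (Fin (2 * N + 2))) :
    ∑ i ∈ X, familyA n N K c δ i = ((∑ i ∈ X, cWeight n N c i : ℕ) : ℚ)
      + δ / 2 * ((∑ i ∈ X, fillWeight n N i : ℕ) : ℚ)
      + K * ((∑ i ∈ X, bigCount n N i : ℕ) : ℚ) := by
  have hpt : ∀ i : Fin (2 * N + 2), familyA n N K c δ i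
      = cWeight n N c i + δ / 2 * fillWeight n N i + K * bigCount n N i := by
    intro i
    simp only [familyA, cWeight, fillWeight, bigCount, blockFun, cItem]
    split_ifs <;> push_cast <;> ring
  simp only [hpt, sum_add_distrib, ← mul_sum, Nat.cast_sum]

theorem sum_familyB (hn : 2 * n ≤ N + 1) (ε : ℚ) (X : Finset (Fin (2 * N + 2))) :
    ∑ i ∈ X, familyB N ε i = ((∑ i ∈ X, unitCount n N i : ℕ) : ℚ)
      + (N + ε) * ((∑ i ∈ X, bigCount n N i : ℕ) : ℚ) := by
  have hpt : ∀ i : Fin (2 * N + 2),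
      familyB N ε i = unitCount n N i + (N + ε) * bigCount n N i := by
    intro i
    simp only [familyB, unitCount, bigCount, blockFun]
    split_ifs <;> first | omega | push_cast; ring
  simp only [hpt, sum_add_distrib, ← mul_sum, Nat.cast_sum]

theorem sum_unitCount_add_sum_bigCount (X : Finset (Fin (2 * N + 2))) :
    ∑ i ∈ X, unitCount n N i + ∑ i ∈ X, bigCount n N i = X.card := by
  rw [← sum_add_distrib, card_eq_sum_ones]
  refine sum_congr rfl fun i _ => ?_
  simp only [unitCount, bigCount, blockFun]
  split_ifs <;> rfl

theorem sum_univ_cWeight (c : Fin n → ℕ) (h : 2 * n ≤ N + 1) :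
    ∑ i : Fin (2 * N + 2), cWeight n N c i = ∑ j, c j := by
  rw [Fin.sum_univ_eq_sum_range (cWeight n N c), cWeight,
    sum_range_blockFun 2 (by omega) (by omega), sum_range]
  simp [cItem]

theorem sum_univ_unitCount (h : 2 * n ≤ N + 1) :
    ∑ i : Fin (2 * N + 2), unitCount n N i = 2 * N := by
  rw [Fin.sum_univ_eq_sum_range (unitCount n N), unitCount,
    sum_range_blockFun 2 (by omega) (by omega)]
  simp only [sum_const, card_range, smul_eq_mul, mul_one, add_tsub_cancel_left]
  omega

theorem sum_univ_fillWeight (hN : 0 < N) (h : 2 * n ≤ N + 1) :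
    ∑ i : Fin (2 * N + 2), fillWeight n N i = 5 * N + 1 - 4 * n := by
  rw [Fin.sum_univ_eq_sum_range (fillWeight n N), fillWeight,
    sum_range_blockFun 2 (by omega) (by omega)]
  simp only [sum_const_zero, add_tsub_cancel_left, smul_eq_mul, zero_add]
  omega

theorem sum_univ_bigCount (h : 2 * n ≤ N + 1) :
    ∑ i : Fin (2 * N + 2), bigCount n N i = 2 := by
  rw [Fin.sum_univ_eq_sum_range (bigCount n N), bigCount,
    sum_range_blockFun 2 (by omega) (by omega)]
  simp

theorem exists_part_with_profile (c : Fin n → ℕ) (J : Finset (Fin n)) {a b : ℕ}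
    (ha : a ≤ N + n - 1) (hb : n + (N + n - 1) + b ≤ 2 * N) :
    ∃ X : Finset (Fin (2 * N + 2)), ∑ i ∈ X, cWeight n N c i = ∑ j ∈ J, c j
      ∧ ∑ i ∈ X, unitCount n N i = J.card + a + b ∧ ∑ i ∈ X, fillWeight n N i = 2 * a + 3 * b
      ∧ ∑ i ∈ X, bigCount n N i = 1 := by
  set Y := J.map Fin.valEmbedding ∪ Ico n (n + a) ∪ Ico (n + (N + n - 1)) (n + (N + n - 1) + b)
    ∪ Ico (2 * N) (2 * N + 1)
  have hJ : J.map Fin.valEmbedding ⊆ range n := by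
    intro k hk
    obtain ⟨j, -, rfl⟩ := mem_map.1 hk
    exact mem_range.2 j.isLt
  have hY : Y ⊆ range (2 * N + 2) := by
    intro k hk
    simp only [Y, mem_union, mem_Ico, mem_range] at hk ⊢
    rcases hk with ((hk | hk) | hk) | hk
    · have := mem_range.1 (hJ hk); omega
    all_goals omega
  refine ⟨univ.filter fun i : Fin (2 * N + 2) => (i : ℕ) ∈ Y, ?_, ?_, ?_, ?_⟩ <;>
    simp only [sum_filter_coe_mem hY, Y, cWeight, unitCount, fillWeight, bigCount,
      sum_blockFun_union hJ (by omega : n + a ≤ n + (N + n - 1)) hb]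
  · simp [cItem]
  · simp
  · simp only [sum_const_zero, smul_eq_mul, zero_add]
    ring
  · simp

theorem sum_preimage_castLE_eq (c : Fin n → ℕ) (hn : n ≤ 2 * N + 2)
    (X : Finset (Fin (2 * N + 2))) :
    ∑ j ∈ X.preimage (Fin.castLE hn) (Fin.castLE_injective hn).injOn, c j
      = ∑ i ∈ X, cWeight n N c i := by
  rw [← sum_preimage (Fin.castLE hn) X (Fin.castLE_injective hn).injOn
    (fun i => cWeight n N c i)]
  · refine sum_congr rfl fun j _ => ?_
    simp [cWeight, blockFun, cItem]
  · intro i _ hi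
    have : ¬ (i : ℕ) < n := fun h => hi ⟨⟨i, h⟩, Fin.ext rfl⟩
    simp [cWeight, blockFun, this]

variable {K : ℕ} {c : Fin n → ℕ} {ε δ : ℚ}

theorem part_ratio_eq_of_profile (hn : 2 * n ≤ N + 1)
    {L : ℕ} (hε : 0 < ε) (hδ : δ * L = 2 * ε) {X : Finset (Fin (2 * N + 2))}
    (hC : ∑ i ∈ X, cWeight n N c i = K * ∑ i ∈ X, bigCount n N i)
    (hs : ∑ i ∈ X, unitCount n N i = N * ∑ i ∈ X, bigCount n N i)
    (hu : 2 * ∑ i ∈ X, fillWeight n N i = L * ∑ i ∈ X, bigCount n N i)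
    (ht : ∑ i ∈ X, bigCount n N i ≠ 0) :
    (∑ i ∈ X, familyA n N K c δ i) / (∑ i ∈ X, familyB N ε i)
      = (2 * (K : ℚ) + ε / 2) / (2 * (N : ℚ) + ε) := by
  rw [sum_familyA, sum_familyB hn]
  exact ratio_eq_of_profile hε hδ hC hs hu ht

theorem profile_of_part_ratio_eq (hK : 0 < K) (hN : N = 4 * K + 1) (hn : 2 * n ≤ N + 1)
    (hcsum : ∑ i, c i = 2 * K)
    (hε : 0 < ε) (hεN : 3 * (N : ℚ) ^ 2 * ε ≤ 1) (hδ : δ * ((5 * N + 1 - 4 * n : ℕ) : ℚ) = 2 * ε)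
    {X : Finset (Fin (2 * N + 2))} (hX : X.Nonempty)
    (h : (∑ i ∈ X, familyA n N K c δ i) / (∑ i ∈ X, familyB N ε i)
      = (2 * (K : ℚ) + ε / 2) / (2 * (N : ℚ) + ε)) :
    ∑ i ∈ X, cWeight n N c i = K * ∑ i ∈ X, bigCount n N i ∧ ∑ i ∈ X, bigCount n N i ≠ 0 := by
  have hle : ∀ f : ℕ → ℕ, ∑ i ∈ X, f i ≤ ∑ i : Fin (2 * N + 2), f i :=
    fun f => sum_le_sum_of_subset (subset_univ X)
  have hcard := sum_unitCount_add_sum_bigCount (n := n) X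
  rw [sum_familyA, sum_familyB hn] at h
  obtain ⟨hC, hs⟩ := profile_eq_of_ratio_eq hK hN (by omega) hε hεN hδ
    ((hle _).trans_eq (by rw [sum_univ_cWeight c hn, hcsum]))
    ((hle _).trans_eq (sum_univ_unitCount hn))
    ((hle _).trans_eq (sum_univ_fillWeight (by omega) hn))
    ((hle _).trans_eq (sum_univ_bigCount hn))
    (by rw [hcard]; exact hX.card_pos) h
  refine ⟨hC, fun ht => ?_⟩
  rw [ht, mul_zero] at hs
  rw [hs, ht] at hcard
  exact hX.card_pos.ne hcard

theorem exists_partition_of_subset_sum (hN : N = 4 * K + 1) (hn : 2 * n + 1 ≤ N)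
    (hc : ∀ i, 0 < c i) (hcsum : ∑ i, c i = 2 * K)
    (hε : 0 < ε) (hδ : δ * ((5 * N + 1 - 4 * n : ℕ) : ℚ) = 2 * ε)
    {J : Finset (Fin n)} (hJ : ∑ i ∈ J, c i = K) :
    ∃ I₁ I₂ : Finset (Fin (2 * N + 2)),
      I₁.Nonempty ∧ I₂.Nonempty ∧ Disjoint I₁ I₂ ∧ I₁ ∪ I₂ = univ ∧
      (∑ i ∈ I₁, familyA n N K c δ i) / (∑ i ∈ I₁, familyB N ε i)
        = (2 * (K : ℚ) + ε / 2) / (2 * (N : ℚ) + ε) ∧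
      (∑ i ∈ I₂, familyA n N K c δ i) / (∑ i ∈ I₂, familyB N ε i)
        = (2 * (K : ℚ) + ε / 2) / (2 * (N : ℚ) + ε) := by
  have hJcard : J.card ≤ K := by
    have := card_le_sum_of_pos hc J
    omega
  have hJn : J.card ≤ n := by simpa using card_le_univ J
  have hJccard : n ≤ K + J.card := by
    have := card_le_sum_of_pos hc Jᶜ
    rw [card_compl, Fintype.card_fin] at this
    have := sum_add_sum_compl J c
    omega
  -- `a` items `δ` and `b` items `3δ/2` complete `J` to a part of `N` unit items and filler `L/2`
  obtain ⟨X, hXc, hXs, hXu, hXt⟩ := exists_part_with_profile (N := N) c J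
    (a := 2 * K + 2 * n - 3 * J.card) (b := 2 * K + 1 + 2 * J.card - 2 * n) (by omega) (by omega)
  have hn' : 2 * n ≤ N + 1 := by omega
  have hcompl : ∀ f : ℕ → ℕ, ∑ i ∈ Xᶜ, f i = ∑ i : Fin (2 * N + 2), f i - ∑ i ∈ X, f i :=
    fun f => by rw [← sum_compl_add_sum X, Nat.add_sub_cancel]
  have hXct : ∑ i ∈ Xᶜ, bigCount n N i = 1 := by rw [hcompl, sum_univ_bigCount hn', hXt]
  have hne : ∀ Y : Finset (Fin (2 * N + 2)), ∑ i ∈ Y, bigCount n N i = 1 → Y.Nonempty :=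
    fun Y hY => nonempty_of_sum_ne_zero (hY ▸ one_ne_zero)
  refine ⟨X, Xᶜ, hne X hXt, hne Xᶜ hXct, disjoint_compl_right, union_compl X, ?_, ?_⟩
  · refine part_ratio_eq_of_profile hn' hε hδ ?_ ?_ ?_ (by omega) <;> rw [hXt, mul_one] <;> omega
  · refine part_ratio_eq_of_profile hn' hε hδ ?_ ?_ ?_ (by omega)
    · rw [hcompl, hXct, sum_univ_cWeight c hn', hXc, hcsum, hJ]; omega
    · rw [hcompl, hXct, sum_univ_unitCount hn', hXs]; omega
    · rw [hcompl, hXct, sum_univ_fillWeight (by omega) hn', hXu]; omega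

theorem exists_subset_sum_of_partition (hK : 0 < K) (hN : N = 4 * K + 1) (hn : 2 * n ≤ N + 1)
    (hcsum : ∑ i, c i = 2 * K)
    (hε : 0 < ε) (hεN : 3 * (N : ℚ) ^ 2 * ε ≤ 1) (hδ : δ * ((5 * N + 1 - 4 * n : ℕ) : ℚ) = 2 * ε)
    {I₁ I₂ : Finset (Fin (2 * N + 2))} (h₁ : I₁.Nonempty) (h₂ : I₂.Nonempty)
    (hdisj : Disjoint I₁ I₂) (hunion : I₁ ∪ I₂ = univ)
    (hr₁ : (∑ i ∈ I₁, familyA n N K c δ i) / (∑ i ∈ I₁, familyB N ε i)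
      = (2 * (K : ℚ) + ε / 2) / (2 * (N : ℚ) + ε))
    (hr₂ : (∑ i ∈ I₂, familyA n N K c δ i) / (∑ i ∈ I₂, familyB N ε i)
      = (2 * (K : ℚ) + ε / 2) / (2 * (N : ℚ) + ε)) :
    ∃ J : Finset (Fin n), ∑ i ∈ J, c i = K := by
  obtain ⟨hC₁, ht₁⟩ := profile_of_part_ratio_eq hK hN hn hcsum hε hεN hδ h₁ hr₁
  obtain ⟨-, ht₂⟩ := profile_of_part_ratio_eq hK hN hn hcsum hε hεN hδ h₂ hr₂
  have ht : ∑ i ∈ I₁, bigCount n N i + ∑ i ∈ I₂, bigCount n N i = 2 := by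
    rw [← sum_union hdisj, hunion, sum_univ_bigCount hn]
  refine ⟨I₁.preimage (Fin.castLE (by omega)) (Fin.castLE_injective _).injOn, ?_⟩
  rw [sum_preimage_castLE_eq, hC₁]
  have : ∑ i ∈ I₁, bigCount n N i = 1 := by omega
  rw [this, mul_one]

end PartitionReduction

/-- Reduction of the partition problem to fractional partition for `m = 2`:
with `N = 4K+1`, `ε = 1/⌈1/ε'⌉` (for the explicit `ε'`), `δ = 2ε/(5N−4n+1)`, and the
rational families `A, B` indexed by `Fin (2N+2)` given by
`A = (c_1,...,c_n, δ,...,δ (N+n−1 times), 3δ/2,...,3δ/2 (N−2n+1 times), K, K)` and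
`B = (1,...,1 (2N times), N+ε, N+ε)`, there is a subset of the `c_i` summing to `K`
iff `Fin (2N+2)` splits into two disjoint nonempty sets on each of which
`(∑ A)/(∑ B) = (2K+ε/2)/(2N+ε)`. -/
theorem partition_reduces_to_FP (n K : ℕ) (hK : 0 < K)
    (c : Fin n → ℕ) (hc : ∀ i, 0 < c i) (hcsum : ∑ i, c i = 2 * K)
    (N : ℕ) (hN : N = 4 * K + 1)
    (ε' : ℝ)
    (hε' : ε' = (-(4 * (N : ℝ) ^ 3 + 2 * (K : ℝ) * (N : ℝ) - (N : ℝ) ^ 2 - 1)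
        + Real.sqrt ((4 * (N : ℝ) ^ 3 + 2 * (K : ℝ) * (N : ℝ) - (N : ℝ) ^ 2 - 1) ^ 2
            + 16 * (N : ℝ) ^ 3)) / (8 * (N : ℝ) ^ 2))
    (ε : ℚ) (hε : ε = 1 / ((⌈1 / ε'⌉ : ℤ) : ℚ))
    (δ : ℚ) (hδ : δ = 2 * ε / (5 * (N : ℚ) - 4 * (n : ℚ) + 1))
    (A B : Fin (2 * N + 2) → ℚ)
    (hA : ∀ i : Fin (2 * N + 2),
      A i = if h : (i : ℕ) < n then (c ⟨(i : ℕ), h⟩ : ℚ)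
        else if (i : ℕ) < n + (N + n - 1) then δ
        else if (i : ℕ) < 2 * N then 3 * δ / 2
        else (K : ℚ))
    (hB : ∀ i : Fin (2 * N + 2),
      B i = if (i : ℕ) < 2 * N then 1 else (N : ℚ) + ε) :
    (∃ J : Finset (Fin n), ∑ i ∈ J, c i = K)
      ↔ ∃ I₁ I₂ : Finset (Fin (2 * N + 2)),
          I₁.Nonempty ∧ I₂.Nonempty ∧ Disjoint I₁ I₂ ∧ I₁ ∪ I₂ = Finset.univ ∧
          (∑ i ∈ I₁, A i) / (∑ i ∈ I₁, B i)
            = (2 * (K : ℚ) + ε / 2) / (2 * (N : ℚ) + ε) ∧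
          (∑ i ∈ I₂, A i) / (∑ i ∈ I₂, B i)
            = (2 * (K : ℚ) + ε / 2) / (2 * (N : ℚ) + ε) := by
  have hn : 2 * n + 1 ≤ N := by
    have := card_le_sum_of_pos hc univ
    rw [card_univ, Fintype.card_fin, hcsum] at this
    omega
  obtain ⟨hεpos, hεN⟩ := eps_pos_and_le hK hN hε' hε
  have hδL : δ * ((5 * N + 1 - 4 * n : ℕ) : ℚ) = 2 * ε := by
    have hden : (5 * (N : ℚ) - 4 * n + 1) ≠ 0 := by
      have : (2 * n + 1 : ℚ) ≤ N := by exact_mod_cast hn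
      linarith
    rw [Nat.cast_sub (by omega), hδ]
    push_cast
    field_simp
    ring
  obtain rfl : A = PartitionReduction.familyA n N K c δ := funext hA
  obtain rfl : B = PartitionReduction.familyB N ε := funext hB
  constructor
  · rintro ⟨J, hJ⟩
    exact PartitionReduction.exists_partition_of_subset_sum hN hn hc hcsum hεpos hδL hJ
  · rintro ⟨I₁, I₂, h₁, h₂, hdisj, hunion, hr₁, hr₂⟩
    exact PartitionReduction.exists_subset_sum_of_partition hK hN (by omega) hcsum hεpos hεN hδL
      h₁ h₂ hdisj hunion hr₁ hr₂
end
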